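/- Let O ⊂ ℝ³ be a nonempty bounded open set. Then there exists a constant C > 0, depending only on O, such that for all l, ω ∈ ℝ³ one has |l| + |ω| ≤ C (∫_O |l + ω × y|² dy)^{1/2}. -/

import Mathlib

noncomputable section

open Set MeasureTheory

/-- We identify ℝ³ with `EuclideanSpace ℝ (Fin 3)`. -/
local notation "E3" => EuclideanSpace ℝ (Fin 3)

/-- The cross product on ℝ³. -/
def cross3 (a b : E3) : E3 :=
  WithLp.toLp 2 ![a 1 * b 2 - a 2 * b 1, a 2 * b 0 - a 0 * b 2, a 0 * b 1 - a 1 * b 0]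

/-! The quantity `N(l, ω) = (∫_O |l + ω × y|² dy)^{1/2}` is continuous and absolutely homogeneous
in `(l, ω)`, and it vanishes only at `(0, 0)`, because a rigid velocity field vanishing on a
nonempty open set is zero. On the finite-dimensional space `ℝ³ × ℝ³` such a function attains a
positive minimum on the unit sphere, which bounds `N` from below by a multiple of the norm. -/

theorem exists_norm_le_mul_of_homogeneous {V : Type*} [NormedAddCommGroup V] [NormedSpace ℝ V]
    [FiniteDimensional ℝ V] {N : V → ℝ} (hN : Continuous N)
    (hsmul : ∀ (c : ℝ) (v : V), N (c • v) = |c| * N v) (hpos : ∀ v ≠ 0, 0 < N v) :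
    ∃ C > 0, ∀ v, ‖v‖ ≤ C * N v := by
  have hN0 : N 0 = 0 := by simpa using hsmul 0 0
  rcases subsingleton_or_nontrivial V with hV | hV
  · exact ⟨1, one_pos, fun v => by simp [Subsingleton.elim v 0, hN0]⟩
  obtain ⟨u, hu, hmin⟩ := (isCompact_sphere (0 : V) 1).exists_isMinOn
    (NormedSpace.sphere_nonempty.2 zero_le_one) hN.continuousOn
  have hNu : 0 < N u := hpos u (ne_zero_of_mem_unit_sphere ⟨u, hu⟩)
  refine ⟨(N u)⁻¹, inv_pos.2 hNu, fun v => ?_⟩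
  rcases eq_or_ne v 0 with rfl | hv
  · simp [hN0]
  have hle : N u ≤ N (‖v‖⁻¹ • v) := hmin (by simp [norm_smul, hv])
  rw [hsmul, abs_inv, abs_norm] at hle
  rw [inv_mul_eq_div, le_div_iff₀ hNu]
  rwa [inv_mul_eq_div, le_div_iff₀ (norm_pos_iff.2 hv), mul_comm] at hle

theorem continuous_parametric_setIntegral_of_isBounded {X Y E : Type*} [TopologicalSpace X]
    [FirstCountableTopology X] [LocallyCompactSpace X] [PseudoMetricSpace Y] [ProperSpace Y]
    [MeasurableSpace Y] [OpensMeasurableSpace Y] [NormedAddCommGroup E] [NormedSpace ℝ E]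
    [SecondCountableTopologyEither Y E] {μ : Measure Y} [IsLocallyFiniteMeasure μ]
    {f : X → Y → E} (hf : Continuous f.uncurry) {s : Set Y} (hs : Bornology.IsBounded s) :
    Continuous fun x => ∫ y in s, f x y ∂μ := by
  have := continuous_parametric_integral_of_continuous (μ := μ.restrict s) hf hs.isCompact_closure
  rwa [Measure.restrict_restrict isClosed_closure.measurableSet,
    inter_eq_right.2 subset_closure] at this

theorem IsOpen.setIntegral_pos_of_continuous_nonneg {X : Type*} [TopologicalSpace X]
    [MeasurableSpace X] [OpensMeasurableSpace X] {μ : Measure X} [μ.IsOpenPosMeasure]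
    {f : X → ℝ} {s : Set X} (hs : IsOpen s) (hf : Continuous f) (hf0 : 0 ≤ f)
    (hfi : IntegrableOn f s μ) {x : X} (hx : x ∈ s) (hfx : f x ≠ 0) :
    0 < ∫ x in s, f x ∂μ :=
  (setIntegral_pos_iff_support_of_nonneg_ae (ae_of_all _ hf0) hfi).2
    ((hf.isOpen_support.inter hs).measure_pos μ ⟨x, hfx, hx⟩)

lemma cross3_eq_crossProduct (a b : E3) :
    cross3 a b = WithLp.toLp 2 (crossProduct a.ofLp b.ofLp) := rfl

lemma cross3_zero_left (b : E3) : cross3 0 b = 0 := by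
  simp [cross3_eq_crossProduct]

lemma cross3_smul_left (c : ℝ) (a b : E3) : cross3 (c • a) b = c • cross3 a b := by
  simp [cross3_eq_crossProduct]

lemma cross3_add_right (a b b' : E3) : cross3 a (b + b') = cross3 a b + cross3 a b' := by
  simp [cross3_eq_crossProduct]

lemma cross3_smul_right (c : ℝ) (a b : E3) : cross3 a (c • b) = c • cross3 a b := by
  simp [cross3_eq_crossProduct]

@[fun_prop]
lemma Continuous.cross3 {X : Type*} [TopologicalSpace X] {f g : X → E3} (hf : Continuous f)
    (hg : Continuous g) : Continuous fun x => cross3 (f x) (g x) := by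
  unfold _root_.cross3
  fun_prop

lemma eq_zero_of_forall_cross3_eq_zero {a : E3} (h : ∀ b, cross3 a b = 0) : a = 0 := by
  ext i
  fin_cases i
  · simpa [cross3] using congrArg (· 1) (h (EuclideanSpace.single 2 1))
  · simpa [cross3] using congrArg (· 0) (h (EuclideanSpace.single 2 1))
  · simpa [cross3] using congrArg (· 1) (h (EuclideanSpace.single 0 1))

open Filter Topology in
theorem eq_zero_of_add_cross3_eq_zero_of_isOpen {O : Set E3} (hO : IsOpen O) (hOne : O.Nonempty)
    {l ω : E3} (h : ∀ y ∈ O, l + cross3 ω y = 0) : l = 0 ∧ ω = 0 := by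
  obtain ⟨y₀, hy₀⟩ := hOne
  have hω : ω = 0 := eq_zero_of_forall_cross3_eq_zero fun v => by
    -- the field at `y₀ + t • v` minus the field at `y₀` is `t • (ω × v)`,
    -- so pick `t ≠ 0` with `y₀ + t • v ∈ O`
    have hline : ∀ᶠ t : ℝ in 𝓝 0, y₀ + t • v ∈ O :=
      (by fun_prop : Continuous fun t : ℝ => y₀ + t • v).continuousAt.preimage_mem_nhds
        (by simpa using hO.mem_nhds hy₀)
    obtain ⟨t, ht, ht0⟩ :=
      ((hline.filter_mono (nhdsWithin_le_nhds (s := {0}ᶜ))).and self_mem_nhdsWithin).exists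
    have hdiff := congrArg₂ (· - ·) (h _ ht) (h _ hy₀)
    simp only [cross3_add_right, cross3_smul_right, add_sub_add_left_eq_sub, add_sub_cancel_left,
      sub_self] at hdiff
    exact (smul_eq_zero.1 hdiff).resolve_left ht0
  refine ⟨?_, hω⟩
  simpa [hω, cross3_zero_left] using h y₀ hy₀

def rigidEnergy (O : Set E3) (p : E3 × E3) : ℝ := ∫ y in O, ‖p.1 + cross3 p.2 y‖ ^ 2

section RigidEnergy

variable {O : Set E3}

lemma continuous_rigidEnergy (hObdd : Bornology.IsBounded O) : Continuous (rigidEnergy O) :=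
  continuous_parametric_setIntegral_of_isBounded
    (f := fun (p : E3 × E3) y => ‖p.1 + cross3 p.2 y‖ ^ 2) (by fun_prop) hObdd

lemma rigidEnergy_smul (c : ℝ) (p : E3 × E3) :
    rigidEnergy O (c • p) = c ^ 2 * rigidEnergy O p := by
  simp only [rigidEnergy, Prod.smul_fst, Prod.smul_snd, cross3_smul_left, ← smul_add, norm_smul,
    mul_pow, Real.norm_eq_abs, sq_abs, integral_const_mul]

lemma rigidEnergy_pos (hO : IsOpen O) (hOne : O.Nonempty) (hObdd : Bornology.IsBounded O)
    {p : E3 × E3} (hp : p ≠ 0) : 0 < rigidEnergy O p := by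
  obtain ⟨y, hy, hne⟩ : ∃ y ∈ O, p.1 + cross3 p.2 y ≠ 0 := by
    by_contra! h
    exact hp (Prod.ext_iff.2 (eq_zero_of_add_cross3_eq_zero_of_isOpen hO hOne h))
  have hcont : Continuous fun y => ‖p.1 + cross3 p.2 y‖ ^ 2 := by fun_prop
  exact hO.setIntegral_pos_of_continuous_nonneg hcont (fun _ => sq_nonneg _)
    ((hcont.continuousOn.integrableOn_compact hObdd.isCompact_closure).mono_set subset_closure) hy
    (by simpa using hne)

end RigidEnergy

/-- Let `O ⊂ ℝ³` be a nonempty bounded open set.  Then there exists a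
constant `C > 0`, depending only on `O`, such that for all `l, ω ∈ ℝ³` one has
`|l| + |ω| ≤ C (∫_O |l + ω × y|² dy)^{1/2}`. -/
theorem statement15
    (O : Set (EuclideanSpace ℝ (Fin 3))) (hO : IsOpen O) (hOne : O.Nonempty)
    (hObdd : Bornology.IsBounded O) :
    ∃ C > (0:ℝ), ∀ l ω : E3,
      ‖l‖ + ‖ω‖ ≤ C * Real.sqrt (∫ y in O, ‖l + cross3 ω y‖ ^ 2) := by
  obtain ⟨C, hC, hbound⟩ := exists_norm_le_mul_of_homogeneous
    (N := fun p => Real.sqrt (rigidEnergy O p))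
    (continuous_rigidEnergy hObdd).sqrt
    (fun c p => by rw [rigidEnergy_smul, Real.sqrt_mul (sq_nonneg c), Real.sqrt_sq_eq_abs])
    (fun p hp => Real.sqrt_pos.2 (rigidEnergy_pos hO hOne hObdd hp))
  refine ⟨2 * C, by positivity, fun l ω => ?_⟩
  calc ‖l‖ + ‖ω‖ ≤ 2 * ‖(l, ω)‖ := by
        linarith [norm_fst_le (l, ω), norm_snd_le (l, ω)]
    _ ≤ 2 * C * Real.sqrt (∫ y in O, ‖l + cross3 ω y‖ ^ 2) := by
        rw [mul_assoc]
        exact mul_le_mul_of_nonneg_left (hbound (l, ω)) zero_le_two
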